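/- arXiv:1909.11084 — 3 statements merged into one kernel-verified Lean document; each statement's English description precedes it below -/
import Mathlib

section
/- Eigenvector centrality is not a rational centrality measure: there do not exist, for each vertex v ∈ {1,2,3}, multivariate polynomials P_{3,v} and a polynomial Q_3 with rational coefficients in the variables X_e (e unordered pairs of distinct vertices of {1,2,3}) such that for every connected graph G on {1,2,3} with edge-indicator vector E one has Q_3[E] ≠ 0 and the eigenvector centrality of v in G equals P_{3,v}[E]/Q_3[E]. Here the eigenvector centrality of v in G is the v-th entry of the unique nonnegative eigenvector of the adjacency matrix of G for its largest eigenvalue, normalized so that the entries sum to 1. -/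
open scoped Classical

noncomputable section

/-- Edge variables: unordered pairs of distinct vertices. -/
def EdgeVar (n : ℕ) : Type := {e : Sym2 (Fin n) // ¬ e.IsDiag}

/-- The 0/1 edge-indicator assignment of a graph `G` to the edge variables. -/
def edgeInd {n : ℕ} (G : SimpleGraph (Fin n)) (e : EdgeVar n) : ℚ :=
  if e.1 ∈ G.edgeSet then 1 else 0

/-- The adjacency matrix of `G` over `ℝ`. -/
def adjMat {n : ℕ} (G : SimpleGraph (Fin n)) : Matrix (Fin n) (Fin n) ℝ :=
  fun i j => if G.Adj i j then 1 else 0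

/-- `μ` is the largest eigenvalue of the matrix `A`. -/
def IsLargestEigenvalue {n : ℕ} (A : Matrix (Fin n) (Fin n) ℝ) (μ : ℝ) : Prop :=
  (∃ c : Fin n → ℝ, c ≠ 0 ∧ A.mulVec c = μ • c) ∧
    ∀ μ' : ℝ, (∃ c : Fin n → ℝ, c ≠ 0 ∧ A.mulVec c = μ' • c) → μ' ≤ μ

/-!
On the path `0 - 1 - 2` every eigenvalue `μ` satisfies `μ (μ² - 2) = 0`, so the largest one is
`√2`, with normalized nonnegative eigenvector `(1 - √2/2, √2 - 1, 1 - √2/2)`. A quotient of two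
polynomials with rational coefficients takes rational values at the 0/1 edge indicators, but
`1 - √2/2` is irrational.
-/

open SimpleGraph

lemma adjMat_pathGraph_three_mulVec (c : Fin 3 → ℝ) :
    (adjMat (pathGraph 3)).mulVec c = ![c 1, c 0 + c 2, c 1] := by
  ext i
  fin_cases i <;> simp [adjMat, pathGraph_adj, Matrix.mulVec, dotProduct, Fin.sum_univ_three]

lemma eigenvalue_le_sqrt_two_of_pathGraph_three {μ : ℝ} {c : Fin 3 → ℝ} (hc : c ≠ 0)
    (h : (adjMat (pathGraph 3)).mulVec c = μ • c) : μ ≤ √2 := by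
  rw [adjMat_pathGraph_three_mulVec] at h
  have h0 : c 1 = μ * c 0 := by simpa using congrFun h 0
  have h1 : c 0 + c 2 = μ * c 1 := by simpa using congrFun h 1
  have h2 : c 1 = μ * c 2 := by simpa using congrFun h 2
  by_cases hc1 : c 1 = 0
  · suffices μ = 0 by simp [this]
    by_contra hμ
    refine hc (funext fun i => ?_)
    fin_cases i
    · simpa [hc1, hμ] using h0
    · exact hc1
    · simpa [hc1, hμ] using h2
  · have hμ2 : μ ^ 2 = 2 := by
      refine mul_right_cancel₀ hc1 ?_
      linear_combination -μ * h1 - h0 - h2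
    calc μ ≤ |μ| := le_abs_self μ
      _ = √2 := by rw [← hμ2, Real.sqrt_sq_eq_abs]

def pathGraphThreePerronVector : Fin 3 → ℝ := ![1 - √2 / 2, √2 - 1, 1 - √2 / 2]

lemma mulVec_pathGraphThreePerronVector :
    (adjMat (pathGraph 3)).mulVec pathGraphThreePerronVector = √2 • pathGraphThreePerronVector := by
  have hsq : √2 * √2 = 2 := Real.mul_self_sqrt zero_le_two
  rw [adjMat_pathGraph_three_mulVec]
  ext i
  fin_cases i <;> simp [pathGraphThreePerronVector] <;> linarith

lemma isLargestEigenvalue_adjMat_pathGraph_three :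
    IsLargestEigenvalue (adjMat (pathGraph 3)) √2 := by
  refine ⟨⟨pathGraphThreePerronVector, fun h => ?_, mulVec_pathGraphThreePerronVector⟩,
    fun μ ⟨c, hc, h⟩ => eigenvalue_le_sqrt_two_of_pathGraph_three hc h⟩
  have h1 : √2 - 1 = 0 := congrFun h 1
  have : (1 : ℝ) < √2 := Real.one_lt_sqrt_two
  linarith

lemma pathGraphThreePerronVector_nonneg (i : Fin 3) : 0 ≤ pathGraphThreePerronVector i := by
  have : √2 ≤ 2 := by rw [Real.sqrt_le_left] <;> norm_num
  fin_cases i <;> simp [pathGraphThreePerronVector] <;> linarith [Real.one_lt_sqrt_two]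

lemma sum_pathGraphThreePerronVector : ∑ i, pathGraphThreePerronVector i = 1 := by
  simp only [Fin.sum_univ_three, pathGraphThreePerronVector, Fin.isValue, Matrix.cons_val]
  ring

lemma irrational_pathGraphThreePerronVector_zero : Irrational (pathGraphThreePerronVector 0) := by
  show Irrational (1 - √2 / 2)
  simpa using (irrational_sqrt_two.div_natCast two_ne_zero).natCast_sub 1

/-- Eigenvector centrality is not a rational centrality measure: there
are no polynomials `P_{3,v}`, `Q₃` with rational coefficients in the edge variables of
`{1,2,3}` such that for every connected graph `G` on three vertices, `Q₃[E] ≠ 0` and the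
eigenvector centrality of every vertex `v` (the `v`-th entry of the nonnegative eigenvector
of the adjacency matrix for its largest eigenvalue, normalized to sum `1`) equals
`P_{3,v}[E]/Q₃[E]`. -/
theorem eigenvector_centrality_not_rational :
    ¬ ∃ (P : Fin 3 → MvPolynomial (EdgeVar 3) ℚ) (Q : MvPolynomial (EdgeVar 3) ℚ),
      ∀ G : SimpleGraph (Fin 3), G.Connected →
        MvPolynomial.eval (edgeInd G) Q ≠ 0 ∧
          ∀ (μ : ℝ) (c : Fin 3 → ℝ),
            IsLargestEigenvalue (adjMat G) μ →
            (adjMat G).mulVec c = μ • c → (∀ i, 0 ≤ c i) → (∑ i, c i) = 1 →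
            ∀ v : Fin 3,
              c v = ((MvPolynomial.eval (edgeInd G) (P v) : ℚ) : ℝ) /
                ((MvPolynomial.eval (edgeInd G) Q : ℚ) : ℝ) := by
  rintro ⟨P, Q, hPQ⟩
  obtain ⟨-, hcentrality⟩ := hPQ (pathGraph 3) (pathGraph_connected 2)
  have h := hcentrality √2 pathGraphThreePerronVector isLargestEigenvalue_adjMat_pathGraph_three
    mulVec_pathGraphThreePerronVector pathGraphThreePerronVector_nonneg
    sum_pathGraphThreePerronVector 0
  exact irrational_pathGraphThreePerronVector_zero.ne_rat _ (by rw [h, Rat.cast_div])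

end
end

section
/- Let G = S_n be the star graph on vertices {1,...,n} (n ≥ 3) with center 1 and edges {1,i} for i = 2,...,n, and let v_N be the unanimity game on N = {1,...,n}, i.e. v_N(T) = 1 if T = N and 0 otherwise (the N-veto game). Then HSh[v_N](1) = 1 and HSh[v_N](i) = 1/(n−1) for every i = 2,...,n. In particular, HSh does not satisfy veto game symmetry: there are players x, y with HSh[v_N](x) > 0, HSh[v_N](y) > 0 but HSh[v_N](x) ≠ HSh[v_N](y). -/
open scoped Classical

noncomputable section

/-- The set of players preceding `x` in the permutation `π` (players listed as `π 0, π 1, ...`). -/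
def preds {n : ℕ} (π : Equiv.Perm (Fin n)) (x : Fin n) : Finset (Fin n) :=
  Finset.univ.filter fun y => π.symm y < π.symm x

/-- The neighborhood `N(x)` of a vertex as a `Finset`. -/
def nbr {n : ℕ} (G : SimpleGraph (Fin n)) (x : Fin n) : Finset (Fin n) :=
  Finset.univ.filter fun y => G.Adj x y

/-- `N(S) = ⋃_{x ∈ S} N(x)`. -/
def nbrS {n : ℕ} (G : SimpleGraph (Fin n)) (S : Finset (Fin n)) : Finset (Fin n) :=
  S.biUnion (nbr G)

/-- The Helping Shapley value `HSh[v](x)` relative to graph `G`. -/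
def HSh {n : ℕ} (G : SimpleGraph (Fin n)) (v : Finset (Fin n) → ℝ) (x : Fin n) : ℝ :=
  (∑ π : Equiv.Perm (Fin n), (v (preds π x ∪ insert x (nbr G x)) - v (preds π x))) /
    (n.factorial : ℝ)

/-- The star graph on `Fin n` with center `0`: edges `{0,i}` for `i ≠ 0`. -/
def starGraph (n : ℕ) [NeZero n] : SimpleGraph (Fin n) where
  Adj i j := i ≠ j ∧ (i = 0 ∨ j = 0)
  symm := ⟨fun i j h => ⟨h.1.symm, h.2.symm⟩⟩
  loopless := ⟨fun i h => h.1 rfl⟩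

/-- The "last among the leaves" predicate. -/
def lastP {n : ℕ} [NeZero n] (j : Fin n) (π : Equiv.Perm (Fin n)) : Prop :=
  ∀ m : Fin n, m ≠ 0 → m ≠ j → π.symm m < π.symm j

lemma lastP_card_eq {n : ℕ} [NeZero n] (j k : Fin n) (hj : j ≠ 0) (hk : k ≠ 0) :
    (Finset.univ.filter fun π : Equiv.Perm (Fin n) => lastP j π).card =
    (Finset.univ.filter fun π : Equiv.Perm (Fin n) => lastP k π).card := by
  rcases eq_or_ne j k with rfl | hjk
  · rfl
  · apply Finset.card_bij' (fun π _ => Equiv.swap j k * π) (fun π _ => Equiv.swap j k * π)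
    · intro π hπ
      simp only [Finset.mem_filter, Finset.mem_univ, true_and] at hπ ⊢
      intro m hm0 hmk
      have hsymm : (Equiv.swap j k * π).symm = π.symm * Equiv.swap j k := by
        rw [show (Equiv.swap j k * π).symm = (Equiv.swap j k * π)⁻¹ from rfl, mul_inv_rev,
          Equiv.swap_inv]
        rfl
      rw [hsymm]
      simp only [Equiv.Perm.mul_apply]
      rw [Equiv.swap_apply_right]
      rcases eq_or_ne m j with rfl | hmj
      · rw [Equiv.swap_apply_left]
        exact hπ k hk (Ne.symm hjk)
      · rw [Equiv.swap_apply_of_ne_of_ne hmj hmk]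
        exact hπ m hm0 hmj
    · intro π hπ
      simp only [Finset.mem_filter, Finset.mem_univ, true_and] at hπ ⊢
      intro m hm0 hmj
      have hsymm : (Equiv.swap j k * π).symm = π.symm * Equiv.swap j k := by
        rw [show (Equiv.swap j k * π).symm = (Equiv.swap j k * π)⁻¹ from rfl, mul_inv_rev,
          Equiv.swap_inv]
        rfl
      rw [hsymm]
      simp only [Equiv.Perm.mul_apply]
      rw [Equiv.swap_apply_left]
      rcases eq_or_ne m k with rfl | hmk
      · rw [Equiv.swap_apply_right]
        exact hπ j hj hjk
      · rw [Equiv.swap_apply_of_ne_of_ne hmj hmk]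
        exact hπ m hm0 hmk
    · intro π _
      rw [← mul_assoc, Equiv.swap_mul_self, one_mul]
    · intro π _
      rw [← mul_assoc, Equiv.swap_mul_self, one_mul]

lemma lastP_partition {n : ℕ} [NeZero n] (hn : 3 ≤ n) :
    ∑ j ∈ Finset.univ.filter (fun j : Fin n => j ≠ 0),
      (Finset.univ.filter fun π : Equiv.Perm (Fin n) => lastP j π).card = n.factorial := by
  have hcov : (Finset.univ : Finset (Equiv.Perm (Fin n))) =
      (Finset.univ.filter (fun j : Fin n => j ≠ 0)).biUnion
        (fun j => Finset.univ.filter fun π : Equiv.Perm (Fin n) => lastP j π) := by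
    apply Finset.ext
    intro π
    simp only [Finset.mem_univ, Finset.mem_biUnion, Finset.mem_filter, true_and, true_iff]
    -- there is a leaf that comes last among leaves
    have hA : (Finset.univ.filter (fun m : Fin n => m ≠ 0)).Nonempty := by
      refine ⟨⟨1, by omega⟩, ?_⟩
      simp only [Finset.mem_filter, Finset.mem_univ, true_and]
      intro h
      have := congrArg Fin.val h
      simp at this
    obtain ⟨j, hjA, hjmax⟩ := Finset.exists_max_image _ (fun m => π.symm m) hA
    simp only [Finset.mem_filter, Finset.mem_univ, true_and] at hjA hjmax
    refine ⟨j, hjA, ?_⟩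
    intro m hm0 hmj
    exact lt_of_le_of_ne (hjmax m hm0) (fun h => hmj (π.symm.injective h))
  have hdisj : ∀ j ∈ Finset.univ.filter (fun j : Fin n => j ≠ 0),
      ∀ k ∈ Finset.univ.filter (fun j : Fin n => j ≠ 0), j ≠ k →
      Disjoint (Finset.univ.filter fun π : Equiv.Perm (Fin n) => lastP j π)
        (Finset.univ.filter fun π : Equiv.Perm (Fin n) => lastP k π) := by
    intro j hj k hk hjk
    simp only [Finset.mem_filter, Finset.mem_univ, true_and] at hj hk
    rw [Finset.disjoint_left]
    intro π hπj hπk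
    simp only [Finset.mem_filter, Finset.mem_univ, true_and] at hπj hπk
    have h1 := hπj k hk (Ne.symm hjk)
    have h2 := hπk j hj hjk
    exact absurd (h1.trans h2) (lt_irrefl _)
  calc ∑ j ∈ Finset.univ.filter (fun j : Fin n => j ≠ 0),
      (Finset.univ.filter fun π : Equiv.Perm (Fin n) => lastP j π).card
      = ((Finset.univ.filter (fun j : Fin n => j ≠ 0)).biUnion
        (fun j => Finset.univ.filter fun π : Equiv.Perm (Fin n) => lastP j π)).card :=
        (Finset.card_biUnion hdisj).symm
    _ = (Finset.univ : Finset (Equiv.Perm (Fin n))).card := by rw [← hcov]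
    _ = n.factorial := by simp [Finset.card_univ, Fintype.card_perm]

lemma lastP_card {n : ℕ} [NeZero n] (hn : 3 ≤ n) (i : Fin n) (hi : i ≠ 0) :
    (n - 1) * (Finset.univ.filter fun π : Equiv.Perm (Fin n) => lastP i π).card
      = n.factorial := by
  have h := lastP_partition (n := n) hn
  rw [Finset.sum_congr rfl (fun j hj => by
    simp only [Finset.mem_filter, Finset.mem_univ, true_and] at hj
    exact lastP_card_eq j i hj hi)] at h
  rw [Finset.sum_const, smul_eq_mul] at h
  have hcard : (Finset.univ.filter (fun j : Fin n => j ≠ 0)).card = n - 1 := by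
    rw [Finset.filter_ne', Finset.card_erase_of_mem (Finset.mem_univ _)]
    simp
  rw [hcard] at h
  exact h

/-- On the star graph `S_n` (`n ≥ 3`, center `0`), the unanimity game
`v_N` has `HSh[v_N](0) = 1` and `HSh[v_N](i) = 1/(n-1)` for every leaf `i`. In particular
`HSh` violates veto game symmetry: two players have positive but different values. -/
theorem HSh_star_unanimity (n : ℕ) [NeZero n] (hn : 3 ≤ n)
    (v : Finset (Fin n) → ℝ)
    (hv : ∀ T : Finset (Fin n), v T = if Finset.univ ⊆ T then 1 else 0) :
    HSh (starGraph n) v 0 = 1 ∧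
    (∀ i : Fin n, i ≠ 0 → HSh (starGraph n) v i = 1 / ((n : ℝ) - 1)) ∧
    ∃ x y : Fin n, 0 < HSh (starGraph n) v x ∧ 0 < HSh (starGraph n) v y ∧
      HSh (starGraph n) v x ≠ HSh (starGraph n) v y := by
  have hfac : (0 : ℝ) < (n.factorial : ℝ) := by positivity
  -- preds never contains x itself
  have hpreds_not : ∀ (π : Equiv.Perm (Fin n)) (x : Fin n), x ∉ preds π x := by
    intro π x
    simp [preds]
  have hpreds_v : ∀ (π : Equiv.Perm (Fin n)) (x : Fin n), v (preds π x) = 0 := by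
    intro π x
    rw [hv, if_neg]
    intro h
    exact hpreds_not π x (h (Finset.mem_univ x))
  -- value for the center
  have h0 : HSh (starGraph n) v 0 = 1 := by
    unfold HSh
    have hterm : ∀ π : Equiv.Perm (Fin n),
        v (preds π 0 ∪ insert 0 (nbr (starGraph n) 0)) - v (preds π 0) = 1 := by
      intro π
      rw [hpreds_v, hv, if_pos, sub_zero]
      intro m _
      rcases eq_or_ne m 0 with rfl | hm
      · exact Finset.mem_union_right _ (Finset.mem_insert_self _ _)
      · refine Finset.mem_union_right _ (Finset.mem_insert_of_mem ?_)
        simp only [nbr, Finset.mem_filter, Finset.mem_univ, true_and]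
        exact ⟨Ne.symm hm, Or.inl rfl⟩
    rw [Finset.sum_congr rfl (fun π _ => hterm π)]
    rw [Finset.sum_const, nsmul_eq_mul, mul_one, Finset.card_univ, Fintype.card_perm,
      Fintype.card_fin]
    exact div_self hfac.ne'
  -- value for a leaf
  have hleaf : ∀ i : Fin n, i ≠ 0 → HSh (starGraph n) v i = 1 / ((n : ℝ) - 1) := by
    intro i hi
    have hnbr : nbr (starGraph n) i = {0} := by
      apply Finset.ext
      intro m
      simp only [nbr, Finset.mem_filter, Finset.mem_univ, true_and, Finset.mem_singleton]
      constructor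
      · rintro ⟨_, h | h⟩
        · exact absurd h hi
        · exact h
      · rintro rfl
        exact ⟨hi, Or.inr rfl⟩
    have hterm : ∀ π : Equiv.Perm (Fin n),
        v (preds π i ∪ insert i (nbr (starGraph n) i)) - v (preds π i) =
        if lastP i π then (1 : ℝ) else 0 := by
      intro π
      rw [hpreds_v, hv, sub_zero, hnbr]
      congr 1
      simp only [eq_iff_iff]
      constructor
      · intro h m hm0 hmi
        have := h (Finset.mem_univ m)
        rcases Finset.mem_union.mp this with hmem | hmem
        · simpa [preds] using hmem
        · rcases Finset.mem_insert.mp hmem with rfl | hmem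
          · exact absurd rfl hmi
          · exact absurd (Finset.mem_singleton.mp hmem) hm0
      · intro h m _
        rcases eq_or_ne m i with rfl | hmi
        · exact Finset.mem_union_right _ (Finset.mem_insert_self _ _)
        · rcases eq_or_ne m 0 with rfl | hm0
          · exact Finset.mem_union_right _ (Finset.mem_insert_of_mem (Finset.mem_singleton_self _))
          · refine Finset.mem_union_left _ ?_
            simp only [preds, Finset.mem_filter, Finset.mem_univ, true_and]
            exact h m hm0 hmi
    unfold HSh
    rw [Finset.sum_congr rfl (fun π _ => hterm π)]
    rw [Finset.sum_boole]
    have hc := lastP_card (n := n) hn i hi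
    have hcR : ((n : ℝ) - 1) *
        ((Finset.univ.filter fun π : Equiv.Perm (Fin n) => lastP i π).card : ℝ) =
        (n.factorial : ℝ) := by
      have h := congrArg (Nat.cast : ℕ → ℝ) hc
      rw [Nat.cast_mul, Nat.cast_sub (by omega : 1 ≤ n)] at h
      push_cast at h ⊢
      linarith
    have hn1 : (0 : ℝ) < (n : ℝ) - 1 := by
      have : (3 : ℝ) ≤ n := by exact_mod_cast hn
      linarith
    rw [div_eq_div_iff hfac.ne' hn1.ne']
    linarith
  refine ⟨h0, hleaf, 0, ⟨1, by omega⟩, ?_, ?_, ?_⟩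
  · rw [h0]; norm_num
  · rw [hleaf ⟨1, by omega⟩ (by intro h; have := congrArg Fin.val h; simp at this)]
    have h3 : (3 : ℝ) ≤ n := by exact_mod_cast hn
    have : (0 : ℝ) < (n : ℝ) - 1 := by linarith
    exact div_pos one_pos this
  · rw [h0, hleaf ⟨1, by omega⟩ (by intro h; have := congrArg Fin.val h; simp at this)]
    have h2 : (2 : ℝ) ≤ (n : ℝ) - 1 := by
      have : (3 : ℝ) ≤ n := by exact_mod_cast hn
      linarith
    intro h
    rw [eq_comm, div_eq_one_iff_eq (by linarith)] at h
    linarith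

end
end

section
/- Let G = (V,E) be a finite simple graph with |V| = n and let v_* be the coalitional game on V defined by v_*(S) = |S ∪ N(S)|. Then for every vertex x ∈ V, the Shapley value of x in v_* equals Σ_{y ∈ N̂(x)} 1/(deg(y)+1). -/
open scoped Classical

noncomputable section

/-- The Shapley value of player `x` in the coalitional game `v`. -/
def Sh {n : ℕ} (v : Finset (Fin n) → ℝ) (x : Fin n) : ℝ :=
  (∑ π : Equiv.Perm (Fin n), (v (insert x (preds π x)) - v (preds π x))) / (n.factorial : ℝ)

/-!
The marginal contribution of `x` to a coalition `S` is the number of vertices `y ∈ N̂(x)` that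
`S` does not yet cover, i.e. with `N̂(y) ∩ S = ∅`. For `S` the predecessors of `x` under `π`, this
says that `x` arrives first among `N̂(y)`. Swapping two members of a set `A` shows that each of
them is first in the same number of permutations, so `x` is first among `N̂(y)` in a fraction
`1 / |N̂(y)| = 1 / (deg y + 1)` of them.
-/

open Finset

lemma Finset.swap_apply_mem {α : Type*} [DecidableEq α] {A : Finset α} {a b z : α}
    (ha : a ∈ A) (hb : b ∈ A) (hz : z ∈ A) : Equiv.swap a b z ∈ A := by
  rw [Equiv.swap_apply_def]
  split_ifs <;> assumption

lemma card_filter_isLeast_eq_one {α β : Type*} [LinearOrder β] {f : α → β}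
    (hf : Function.Injective f) {A : Finset α} (hA : A.Nonempty) :
    #{a ∈ A | ∀ z ∈ A, f a ≤ f z} = 1 := by
  obtain ⟨a₀, ha₀, hmin⟩ := A.exists_min_image f hA
  rw [card_eq_one]
  refine ⟨a₀, eq_singleton_iff_unique_mem.2 ⟨mem_filter.2 ⟨ha₀, hmin⟩, fun b hb => ?_⟩⟩
  rw [mem_filter] at hb
  exact hf ((hb.2 a₀ ha₀).antisymm (hmin b hb.1))

section FirstAmong

variable {α : Type*} [Fintype α] [LinearOrder α]

def firstAmong (A : Finset α) (a : α) : Finset (Equiv.Perm α) :=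
  {σ | ∀ z ∈ A, σ.symm a ≤ σ.symm z}

lemma mem_firstAmong {A : Finset α} {a : α} {σ : Equiv.Perm α} :
    σ ∈ firstAmong A a ↔ ∀ z ∈ A, σ.symm a ≤ σ.symm z := by
  simp [firstAmong]

lemma card_firstAmong_eq {A : Finset α} {a b : α} (ha : a ∈ A) (hb : b ∈ A) :
    #(firstAmong A a) = #(firstAmong A b) := by
  refine card_equiv (Equiv.mulLeft (Equiv.swap a b)) fun σ => ?_
  have hsymm : ∀ z, (Equiv.swap a b * σ).symm z = σ.symm (Equiv.swap a b z) := by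
    simp [Equiv.Perm.mul_def]
  simp only [mem_firstAmong, Equiv.coe_mulLeft, hsymm, Equiv.swap_apply_right]
  refine ⟨fun h z hz => h _ (swap_apply_mem ha hb hz), fun h z hz => ?_⟩
  simpa using h _ (swap_apply_mem ha hb hz)

lemma sum_card_firstAmong {A : Finset α} (hA : A.Nonempty) :
    ∑ a ∈ A, #(firstAmong A a) = (Fintype.card α).factorial := by
  calc ∑ a ∈ A, #(firstAmong A a)
      = ∑ σ : Equiv.Perm α, #{a ∈ A | ∀ z ∈ A, σ.symm a ≤ σ.symm z} := by
        simp only [card_eq_sum_ones, sum_filter, firstAmong]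
        exact sum_comm
    _ = ∑ _σ : Equiv.Perm α, 1 :=
        sum_congr rfl fun σ _ => by convert card_filter_isLeast_eq_one σ.symm.injective hA
    _ = (Fintype.card α).factorial := by simp [Fintype.card_perm]

theorem card_firstAmong_mul_card {A : Finset α} {a : α} (ha : a ∈ A) :
    #(firstAmong A a) * #A = (Fintype.card α).factorial := by
  rw [← sum_card_firstAmong ⟨a, ha⟩, mul_comm, ← smul_eq_mul, ← sum_const]
  exact sum_congr rfl fun b hb => card_firstAmong_eq ha hb

theorem card_firstAmong_div_factorial {A : Finset α} {a : α} (ha : a ∈ A) :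
    (#(firstAmong A a) : ℝ) / (Fintype.card α).factorial = 1 / #A := by
  have hA : (#A : ℝ) ≠ 0 := by exact_mod_cast (card_pos.2 ⟨a, ha⟩).ne'
  rw [div_eq_div_iff (by positivity) hA, one_mul]
  exact_mod_cast card_firstAmong_mul_card ha

end FirstAmong

section Coverage

variable {n : ℕ} {G : SimpleGraph (Fin n)}

lemma mem_nbr {x y : Fin n} : y ∈ nbr G x ↔ G.Adj x y := by
  simp [nbr]

lemma card_insert_nbr (y : Fin n) : #(insert y (nbr G y)) = #(nbr G y) + 1 :=
  card_insert_of_notMem (by simp [mem_nbr])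

lemma mem_insert_nbr_comm {x y : Fin n} : x ∈ insert y (nbr G y) ↔ y ∈ insert x (nbr G x) := by
  simp only [mem_insert, mem_nbr, G.adj_comm, eq_comm]

lemma mem_union_nbrS_iff {S : Finset (Fin n)} {y : Fin n} :
    y ∈ S ∪ nbrS G S ↔ ¬Disjoint (insert y (nbr G y)) S := by
  simp only [not_disjoint_iff, mem_union, nbrS, mem_biUnion, mem_insert, mem_nbr]
  constructor
  · rintro (hy | ⟨z, hz, hzy⟩)
    · exact ⟨y, Or.inl rfl, hy⟩
    · exact ⟨z, Or.inr hzy.symm, hz⟩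
  · rintro ⟨z, rfl | hyz, hz⟩
    · exact Or.inl hz
    · exact Or.inr ⟨z, hz, hyz.symm⟩

lemma insert_union_nbrS_insert (S : Finset (Fin n)) (x : Fin n) :
    insert x S ∪ nbrS G (insert x S) = (S ∪ nbrS G S) ∪ insert x (nbr G x) := by
  ext z
  simp only [nbrS, biUnion_insert, mem_union, mem_insert]
  tauto

lemma card_union_nbrS_insert (S : Finset (Fin n)) (x : Fin n) :
    #(insert x S ∪ nbrS G (insert x S)) =
      #(S ∪ nbrS G S) + #{y ∈ insert x (nbr G x) | Disjoint (insert y (nbr G y)) S} := by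
  have hnew : insert x (nbr G x) \ (S ∪ nbrS G S) =
      {y ∈ insert x (nbr G x) | Disjoint (insert y (nbr G y)) S} := by
    ext y
    simp only [mem_sdiff, mem_filter, mem_union_nbrS_iff, not_not]
  rw [insert_union_nbrS_insert, hnew.symm, union_comm, ← card_sdiff_add_card, add_comm]

end Coverage

lemma disjoint_preds_iff_mem_firstAmong {n : ℕ} {π : Equiv.Perm (Fin n)} {A : Finset (Fin n)} {x : Fin n} :
    Disjoint A (preds π x) ↔ π ∈ firstAmong A x := by
  simp [disjoint_left, preds, mem_firstAmong]

/-- For the game `v_*(S) = |S ∪ N(S)|` of game-theoretic network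
centrality, the Shapley value of a vertex `x` equals `∑_{y ∈ N̂(x)} 1/(deg(y) + 1)`. -/
theorem shapley_game_theoretic_centrality (n : ℕ) (G : SimpleGraph (Fin n)) (x : Fin n) :
    Sh (fun S : Finset (Fin n) => ((S ∪ nbrS G S).card : ℝ)) x =
      ∑ y ∈ insert x (nbr G x), 1 / (((nbr G y).card : ℝ) + 1) := by
  have hmarginal : ∀ π : Equiv.Perm (Fin n),
      (#(insert x (preds π x) ∪ nbrS G (insert x (preds π x))) : ℝ) -
          #(preds π x ∪ nbrS G (preds π x)) =
        ∑ y ∈ insert x (nbr G x), if π ∈ firstAmong (insert y (nbr G y)) x then 1 else 0 := by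
    intro π
    simp only [card_union_nbrS_insert, ← disjoint_preds_iff_mem_firstAmong, sum_boole, Nat.cast_add]
    ring
  calc Sh (fun S : Finset (Fin n) => ((S ∪ nbrS G S).card : ℝ)) x
      = (∑ π : Equiv.Perm (Fin n), ∑ y ∈ insert x (nbr G x),
          if π ∈ firstAmong (insert y (nbr G y)) x then 1 else 0) / n.factorial := by
        simp only [Sh, hmarginal]
    _ = ∑ y ∈ insert x (nbr G x), (#(firstAmong (insert y (nbr G y)) x) : ℝ) / n.factorial := by
        rw [sum_comm, sum_div]
        simp only [sum_boole, filter_mem_eq_inter, univ_inter]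
    _ = ∑ y ∈ insert x (nbr G x), 1 / (((nbr G y).card : ℝ) + 1) := by
        refine sum_congr rfl fun y hy => ?_
        have := card_firstAmong_div_factorial (mem_insert_nbr_comm.2 hy)
        rw [Fintype.card_fin, card_insert_nbr] at this
        exact_mod_cast this

end
end
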